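/- Let V be an n-dimensional real inner product space and F a skew-symmetric bilinear form on V. Then the Ricci contraction of F̃ := −(1/2)(F ∧ id) + F ⊗ id equals −(n/2)·F. -/

import Mathlib

noncomputable section

/-- `V n` is the model `n`-dimensional real inner product space. -/
abbrev V (n : ℕ) := EuclideanSpace ℝ (Fin n)

/-- The standard orthonormal basis of `V n`. -/
def ee (n : ℕ) (i : Fin n) : V n := EuclideanSpace.single i 1

/-- The vector dual to a (linear) functional `f`, `⟨sharpF f, z⟩ = f z`. -/
def sharpF {n : ℕ} (f : V n → ℝ) : V n := ∑ i, f (ee n i) • ee n i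

/-- The suspension `(A ∧ id)_{X,Y}(Z) := (A(Y,·) ∧ X)(Z) − (A(X,·) ∧ Y)(Z)`,
where `(α ∧ X)(Z) := α(Z)X − ⟨X,Z⟩α♯`. -/
def susp {n : ℕ} (A : V n → V n → ℝ) (x y z : V n) : V n :=
  (A y z • x - (inner ℝ x z : ℝ) • sharpF (A y))
    - (A x z • y - (inner ℝ y z : ℝ) • sharpF (A x))

/-- The Ricci contraction `ric(R)(X,Y) := tr (Z ↦ R_{Z,X}Y)`. -/
def ricci {n : ℕ} (R : V n → V n → V n → V n) (x y : V n) : ℝ :=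
  ∑ i, (inner ℝ (R (ee n i) x y) (ee n i) : ℝ)

/-!
Contracting the suspension against the trace gives
`ric(F ∧ id)(x, y) = n F(x, y) − F(x, y) − F(x, y) + ⟨x, y⟩ tr F`,
and `tr F = 0` for skew `F`, while `ric(F ⊗ id)(x, y) = F(y, x) = −F(x, y)`.
Hence `ric(F̃) = −(n − 2)/2 · F − F = −(n/2) F`.
-/

section

variable {n : ℕ}

theorem ee_eq_basisFun : ee n = EuclideanSpace.basisFun (Fin n) ℝ := by
  funext i
  rw [ee, EuclideanSpace.basisFun_apply]

theorem inner_ee_self (i : Fin n) : inner ℝ (ee n i) (ee n i) = (1 : ℝ) := by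
  simp [ee_eq_basisFun]

theorem sum_inner_ee_mul (f : V n →ₗ[ℝ] ℝ) (z : V n) :
    ∑ i, inner ℝ z (ee n i) * f (ee n i) = f z := by
  conv_rhs => rw [← (EuclideanSpace.basisFun (Fin n) ℝ).sum_repr' z]
  simp [ee_eq_basisFun, real_inner_comm]

theorem inner_sharpF (f : V n →ₗ[ℝ] ℝ) (z : V n) : inner ℝ (sharpF f) z = f z := by
  simp only [sharpF, sum_inner, real_inner_smul_left, ← sum_inner_ee_mul f z]
  exact Finset.sum_congr rfl fun i _ => by rw [real_inner_comm, mul_comm]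

theorem ricci_smul_add (t : ℝ) (R S : V n → V n → V n → V n) (x y : V n) :
    ricci (fun a b c => t • R a b c + S a b c) x y = t * ricci R x y + ricci S x y := by
  simp only [ricci, inner_add_left, real_inner_smul_left, Finset.sum_add_distrib,
    Finset.mul_sum]

theorem ricci_smul_id (B : V n →ₗ[ℝ] V n →ₗ[ℝ] ℝ) (x y : V n) :
    ricci (fun a b c => B a b • c) x y = B y x := by
  rw [ricci, ← B.flip_apply y x, ← sum_inner_ee_mul]
  refine Finset.sum_congr rfl fun i _ => ?_
  rw [real_inner_smul_left, LinearMap.flip_apply, mul_comm]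

theorem inner_susp_ee (B : V n →ₗ[ℝ] V n →ₗ[ℝ] ℝ) (x y : V n) (i : Fin n) :
    inner ℝ (susp (fun u v => B u v) (ee n i) x y) (ee n i)
      = B x y - inner ℝ y (ee n i) * B x (ee n i) - inner ℝ x (ee n i) * B (ee n i) y
        + inner ℝ x y * B (ee n i) (ee n i) := by
  simp only [susp, inner_sub_left, real_inner_smul_left, inner_sharpF, inner_ee_self]
  rw [real_inner_comm y]
  ring

theorem ricci_susp (B : V n →ₗ[ℝ] V n →ₗ[ℝ] ℝ) (x y : V n) :
    ricci (susp fun u v => B u v) x y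
      = (n - 2) * B x y + inner ℝ x y * ∑ i, B (ee n i) (ee n i) := by
  have hleft := sum_inner_ee_mul (B.flip y) x
  simp only [LinearMap.flip_apply] at hleft
  simp only [ricci, inner_susp_ee, Finset.sum_add_distrib, Finset.sum_sub_distrib,
    sum_inner_ee_mul, hleft, Finset.sum_const, Finset.card_univ, Fintype.card_fin, nsmul_eq_mul,
    ← Finset.mul_sum]
  ring

theorem sum_apply_ee_self_eq_zero {B : V n →ₗ[ℝ] V n →ₗ[ℝ] ℝ} (hB : ∀ x y, B x y = -B y x) :
    ∑ i, B (ee n i) (ee n i) = 0 :=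
  Finset.sum_eq_zero fun i _ => by linarith [hB (ee n i) (ee n i)]

end

/-- For a skew-symmetric bilinear form `F` on an `n`-dimensional inner product space,
the Ricci contraction of `F̃ := −(1/2)(F ∧ id) + F ⊗ id` equals `−(n/2)·F`. -/
theorem ricci_faraday {n : ℕ} (F : V n →ₗ[ℝ] V n →ₗ[ℝ] ℝ)
    (hskew : ∀ x y, F x y = - F y x) (x y : V n) :
    ricci (fun a b c => -(1 / 2 : ℝ) • susp (fun u v => F u v) a b c + F a b • c) x y
      = -((n : ℝ) / 2) * F x y := by
  rw [ricci_smul_add, ricci_susp, ricci_smul_id, sum_apply_ee_self_eq_zero hskew,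
    hskew y x]
  ring
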